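/- More generally, if a maximal stabilizer group G on N qubits satisfies δ(G) ≥ k+1 (so |ψ_G⟩ is in k-body MITE), then any nonzero traceless Hamiltonian annihilating |ψ_G⟩ must contain at least one Pauli term whose support has size at least ⌈(k+1)/2⌉. -/

import Mathlib

open Matrix Complex BigOperators
open scoped Classical

noncomputable section

/-- Single-qubit Pauli matrices: I, X, Y, Z. -/
def pauli1 : Fin 4 → Matrix (Fin 2) (Fin 2) ℂ
  | 0 => 1
  | 1 => !![0, 1; 1, 0]
  | 2 => !![0, -Complex.I; Complex.I, 0]
  | 3 => !![1, 0; 0, -1]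

/-- Operators on an N-qubit system with sites indexed by `V`. -/
abbrev QOp (V : Type*) := Matrix (V → Fin 2) (V → Fin 2) ℂ

/-- The prefactor-1 Pauli string with single-site labels `p`. -/
def pauliOp {V : Type*} [Fintype V] (p : V → Fin 4) : QOp V :=
  Matrix.of fun x y => ∏ i, pauli1 (p i) (x i) (y i)

/-- Support of a Pauli string: sites where the tensor factor is not the identity. -/
def psupp {V : Type*} [Fintype V] (p : V → Fin 4) : Finset V :=
  Finset.univ.filter fun i => p i ≠ 0

/-- Allowed phases of Pauli group elements. -/
def isPhase (a : ℂ) : Prop := a = 1 ∨ a = -1 ∨ a = Complex.I ∨ a = -Complex.I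

/-- A maximal stabilizer group on qubits indexed by `V`: an abelian set of
prefactor-`±1` Pauli strings, closed under multiplication, containing `I`,
not containing `-I`, of cardinality `2 ^ |V|`. -/
structure MaxStabilizer (V : Type*) [Fintype V] [DecidableEq V] where
  carrier : Finset (QOp V)
  mem_pauli : ∀ g ∈ carrier, ∃ (c : ℂ) (p : V → Fin 4), (c = 1 ∨ c = -1) ∧ g = c • pauliOp p
  one_mem : (1 : QOp V) ∈ carrier
  mul_mem : ∀ g ∈ carrier, ∀ h ∈ carrier, g * h ∈ carrier
  mul_comm' : ∀ g ∈ carrier, ∀ h ∈ carrier, g * h = h * g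
  neg_one_not_mem : (-1 : QOp V) ∉ carrier
  card_eq : carrier.card = 2 ^ Fintype.card V

/-- `ψ` is the stabilizer state of `G`: a normalized common `+1`-eigenvector of all
elements of `G`. -/
def IsStabState {V : Type*} [Fintype V] [DecidableEq V] (G : MaxStabilizer V)
    (ψ : (V → Fin 2) → ℂ) : Prop :=
  (∀ g ∈ G.carrier, Matrix.mulVec g ψ = ψ) ∧ ∑ x, starRingEnd ℂ (ψ x) * ψ x = 1

/-- The projector `|ψ⟩⟨ψ|` onto a state `ψ`. -/
def projOf {V : Type*} (ψ : (V → Fin 2) → ℂ) : QOp V :=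
  Matrix.vecMulVec ψ fun x => starRingEnd ℂ (ψ x)

/-- Reduced density matrix (partial trace over the complement of `A`). -/
def reduced {V : Type*} [Fintype V] [DecidableEq V] (ρ : QOp V) (A : Finset V) :
    Matrix ({i // i ∈ A} → Fin 2) ({i // i ∈ A} → Fin 2) ℂ :=
  Matrix.of fun a b => ∑ c : {i // i ∉ A} → Fin 2,
    ρ (fun i => if h : i ∈ A then a ⟨i, h⟩ else c ⟨i, h⟩)
      (fun i => if h : i ∈ A then b ⟨i, h⟩ else c ⟨i, h⟩)

/-- `δ(G)`: minimum support size over nonidentity elements of `G`. -/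
def sdelta {V : Type*} [Fintype V] [DecidableEq V] (G : MaxStabilizer V) : ℕ :=
  sInf {k | ∃ (c : ℂ) (p : V → Fin 4), (c = 1 ∨ c = -1) ∧ c • pauliOp p ∈ G.carrier ∧
    c • pauliOp p ≠ 1 ∧ (psupp p).card = k}

/-! The stabilizer projector `2⁻ⁿ ∑_{g ∈ G} g` is a hermitian idempotent of trace one fixing `ψ`,
hence equals `|ψ⟩⟨ψ|`. So `⟨ψ|R|ψ⟩ = 2⁻ⁿ ∑_{g ∈ G} tr(R g)` vanishes for every non-identity Pauli
string `R` of weight below `δ(G)`, since `tr(R g) = 0` unless `g = ±R`. If every term of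
`H = ∑ h_P P` had weight below `⌈(k+1)/2⌉`, any product `PQ` of two distinct terms would have
weight at most `k < δ(G)`; the vectors `Pψ` would then be orthonormal, and
`‖Hψ‖² = ∑ |h_P|² > 0`. -/

open scoped ComplexOrder

section PiKronecker

variable {V n R : Type*} [Fintype V] [CommRing R]

def piKronecker (m : V → Matrix n n R) : Matrix (V → n) (V → n) R :=
  of fun x y => ∏ i, m i (x i) (y i)

lemma piKronecker_mul [Fintype n] [DecidableEq V] (m m' : V → Matrix n n R) :
    piKronecker m * piKronecker m' = piKronecker fun i => m i * m' i := by
  ext x y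
  simp only [piKronecker, mul_apply, of_apply, ← Finset.prod_mul_distrib]
  rw [Finset.prod_univ_sum, Fintype.piFinset_univ]

lemma trace_piKronecker [Fintype n] [DecidableEq V] (m : V → Matrix n n R) :
    (piKronecker m).trace = ∏ i, (m i).trace := by
  simp only [trace, diag, piKronecker, of_apply]
  rw [Finset.prod_univ_sum, Fintype.piFinset_univ]

lemma piKronecker_one [DecidableEq n] [DecidableEq V] :
    piKronecker (fun _ : V => (1 : Matrix n n R)) = 1 := by
  ext x y
  simp only [piKronecker, of_apply, one_apply, Finset.prod_boole, Finset.mem_univ,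
    forall_const, funext_iff]

lemma conjTranspose_piKronecker [StarRing R] (m : V → Matrix n n R) :
    (piKronecker m)ᴴ = piKronecker fun i => (m i)ᴴ := by
  ext x y
  simp [piKronecker, conjTranspose_apply, star_prod]

end PiKronecker

/-- With the labels `0, 1, 2, 3 = I, X, Y, Z`, Pauli labels multiply by bitwise xor, up to this
phase. -/
def pauliPhase : Fin 4 → Fin 4 → ℂ :=
  ![![1, 1, 1, 1], ![1, 1, I, -I], ![1, -I, 1, I], ![1, I, -I, 1]]

lemma pauli1_mul (a b : Fin 4) : pauli1 a * pauli1 b = pauliPhase a b • pauli1 (a ^^^ b) := by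
  fin_cases a <;> fin_cases b <;> ext i j <;> fin_cases i <;> fin_cases j <;>
    simp [pauli1, pauliPhase, mul_apply, Fin.sum_univ_two, one_apply]

lemma pauliPhase_self (a : Fin 4) : pauliPhase a a = 1 := by
  fin_cases a <;> simp [pauliPhase]

lemma fin4_xor_eq_zero_iff {a b : Fin 4} : a ^^^ b = 0 ↔ a = b := by
  revert a b; decide

lemma conjTranspose_pauli1 (a : Fin 4) : (pauli1 a)ᴴ = pauli1 a := by
  fin_cases a <;> ext i j <;> fin_cases i <;> fin_cases j <;>
    simp [pauli1, conjTranspose_apply, one_apply]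

lemma trace_pauli1 (a : Fin 4) : (pauli1 a).trace = if a = 0 then 2 else 0 := by
  fin_cases a <;> simp [pauli1, trace, Fin.sum_univ_two, one_apply]

section PauliString

variable {V : Type*} [Fintype V]

lemma pauliOp_eq_piKronecker (p : V → Fin 4) :
    pauliOp p = piKronecker fun i => pauli1 (p i) := rfl

lemma conjTranspose_pauliOp (P : V → Fin 4) : (pauliOp P)ᴴ = pauliOp P := by
  simp only [pauliOp_eq_piKronecker, conjTranspose_piKronecker, conjTranspose_pauli1]

variable [DecidableEq V]

lemma pauliOp_mul (P Q : V → Fin 4) :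
    pauliOp P * pauliOp Q =
      (∏ i, pauliPhase (P i) (Q i)) • pauliOp fun i => P i ^^^ Q i := by
  simp only [pauliOp_eq_piKronecker, piKronecker_mul, pauli1_mul]
  ext x y
  simp [piKronecker, Finset.prod_mul_distrib]

lemma pauliOp_zero : pauliOp (0 : V → Fin 4) = 1 :=
  piKronecker_one

lemma pauliOp_mul_self (P : V → Fin 4) : pauliOp P * pauliOp P = 1 := by
  simp [pauliOp_mul, pauliPhase_self, ← Pi.zero_def, pauliOp_zero]

lemma trace_pauliOp (P : V → Fin 4) :
    (pauliOp P).trace = if P = 0 then 2 ^ Fintype.card V else 0 := by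
  rw [pauliOp_eq_piKronecker, trace_piKronecker]
  simp only [trace_pauli1, Finset.prod_ite_zero, funext_iff, Pi.zero_apply, Finset.mem_univ,
    true_implies, Finset.prod_const, Finset.card_univ]

lemma trace_pauliOp_mul_pauliOp (P Q : V → Fin 4) :
    (pauliOp P * pauliOp Q).trace = if P = Q then 2 ^ Fintype.card V else 0 := by
  simp only [pauliOp_mul, trace_smul, trace_pauliOp, funext_iff, Pi.zero_apply,
    fin4_xor_eq_zero_iff]
  split_ifs with h
  · simp [h, pauliPhase_self]
  · simp

lemma smul_pauliOp_ne_one {P : V → Fin 4} (hP : P ≠ 0) (c : ℂ) : c • pauliOp P ≠ 1 := by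
  intro h
  have := congrArg trace h
  simp only [trace_smul, trace_pauliOp, hP, if_false, smul_zero, trace_one, Fintype.card_fun,
    Fintype.card_fin] at this
  exact absurd this.symm (by positivity)

lemma psupp_xor_subset (P Q : V → Fin 4) :
    psupp (fun i => P i ^^^ Q i) ⊆ psupp P ∪ psupp Q := by
  intro i
  simp only [psupp, Finset.mem_union, Finset.mem_filter, Finset.mem_univ, true_and]
  contrapose!
  rintro ⟨hP, hQ⟩
  rw [hP, hQ]
  rfl

end PauliString

namespace MaxStabilizer

variable {V : Type*} [Fintype V] [DecidableEq V] (G : MaxStabilizer V)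

lemma conjTranspose_eq_self_of_mem {g : QOp V} (hg : g ∈ G.carrier) : gᴴ = g := by
  obtain ⟨c, p, hc | hc, rfl⟩ := G.mem_pauli g hg <;> simp [hc, conjTranspose_pauliOp]

lemma mul_self_eq_one_of_mem {g : QOp V} (hg : g ∈ G.carrier) : g * g = 1 := by
  obtain ⟨c, p, hc | hc, rfl⟩ := G.mem_pauli g hg <;> simp [hc, pauliOp_mul_self]

lemma trace_eq_zero_of_mem {g : QOp V} (hg : g ∈ G.carrier) (hne : g ≠ 1) : g.trace = 0 := by
  obtain ⟨c, p, hc, rfl⟩ := G.mem_pauli g hg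
  by_cases hp : p = 0
  · subst hp
    rw [pauliOp_zero] at hg hne
    rcases hc with rfl | rfl
    · exact absurd (one_smul ℂ _) hne
    · exact absurd (by simpa using hg) G.neg_one_not_mem
  · simp [trace_pauliOp, hp]

lemma sdelta_le {c : ℂ} {p : V → Fin 4} (hc : c = 1 ∨ c = -1) (hg : c • pauliOp p ∈ G.carrier)
    (hne : c • pauliOp p ≠ 1) : sdelta G ≤ (psupp p).card :=
  Nat.sInf_le ⟨c, p, hc, hg, hne, rfl⟩

def proj : QOp V := ((2 : ℂ) ^ Fintype.card V)⁻¹ • ∑ g ∈ G.carrier, g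

lemma isHermitian_proj : G.proj.IsHermitian := by
  rw [IsHermitian, proj, conjTranspose_smul, conjTranspose_sum,
    Finset.sum_congr rfl fun g hg => G.conjTranspose_eq_self_of_mem hg]
  simp

lemma mul_sum_carrier {g : QOp V} (hg : g ∈ G.carrier) :
    g * ∑ h ∈ G.carrier, h = ∑ h ∈ G.carrier, h := by
  rw [Finset.mul_sum]
  refine Finset.sum_nbij' (g * ·) (g * ·) (fun h hh => G.mul_mem g hg h hh)
    (fun h hh => G.mul_mem g hg h hh) (fun h _ => ?_) (fun h _ => ?_) fun _ _ => rfl <;>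
  simp [← mul_assoc, G.mul_self_eq_one_of_mem hg]

lemma isIdempotentElem_proj : IsIdempotentElem G.proj := by
  rw [IsIdempotentElem, proj, Matrix.smul_mul, Matrix.mul_smul, Finset.sum_mul,
    Finset.sum_congr rfl fun g hg => G.mul_sum_carrier hg, Finset.sum_const, G.card_eq,
    smul_smul, ← Nat.cast_smul_eq_nsmul ℂ, smul_smul]
  push_cast
  field_simp

lemma trace_proj : G.proj.trace = 1 := by
  rw [proj, trace_smul, trace_sum,
    Finset.sum_eq_single_of_mem 1 G.one_mem fun g hg hne => G.trace_eq_zero_of_mem hg hne]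
  simp

lemma proj_mulVec {ψ : (V → Fin 2) → ℂ} (hψ : IsStabState G ψ) : G.proj *ᵥ ψ = ψ := by
  rw [proj, smul_mulVec, sum_mulVec, Finset.sum_congr rfl hψ.1, Finset.sum_const, G.card_eq,
    ← Nat.cast_smul_eq_nsmul ℂ, smul_smul]
  push_cast
  field_simp
  simp

end MaxStabilizer

lemma Matrix.eq_of_mul_eq_right_of_trace_eq {n R : Type*} [Fintype n] [CommRing R]
    [PartialOrder R] [StarRing R] [StarOrderedRing R] [NoZeroDivisors R] {A B : Matrix n n R}
    (hA : A.IsHermitian) (hB : B.IsHermitian) (hA2 : IsIdempotentElem A)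
    (hB2 : IsIdempotentElem B) (hAB : A * B = B) (htr : A.trace = B.trace) : A = B := by
  rw [← sub_eq_zero, ← trace_conjTranspose_mul_self_eq_zero_iff, conjTranspose_sub, hA.eq,
    hB.eq, sub_mul, mul_sub, mul_sub, hA2.eq, hB2.eq, hAB, trace_sub, trace_sub, trace_sub,
    trace_mul_comm B A, hAB, htr]
  abel

lemma star_sum_smul_dotProduct_sum_smul {ι n R : Type*} [Fintype ι] [DecidableEq ι] [Fintype n]
    [CommRing R] [StarRing R] (c : ι → R) (v : ι → n → R)
    (hv : ∀ i j, c i ≠ 0 → c j ≠ 0 → star (v i) ⬝ᵥ v j = if i = j then 1 else 0) :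
    star (∑ i, c i • v i) ⬝ᵥ ∑ i, c i • v i = star c ⬝ᵥ c := by
  have hterm : ∀ i j, c j * (star (c i) * (star (v i) ⬝ᵥ v j)) =
      if j = i then star (c i) * c i else 0 := by
    intro i j
    rcases eq_or_ne j i with rfl | hji
    · by_cases hj : c j = 0
      · simp [hj]
      · simp [hv j j hj hj, mul_comm]
    rw [if_neg hji]
    by_cases hi : c i = 0
    · simp [hi]
    by_cases hj : c j = 0
    · simp [hj]
    simp [hv i j hi hj, Ne.symm hji]
  simp only [star_sum, star_smul, sum_dotProduct, dotProduct_sum, smul_dotProduct,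
    dotProduct_smul, smul_eq_mul, Finset.mul_sum, hterm, Finset.sum_ite_eq, Finset.mem_univ,
    if_true]
  rfl

lemma projOf_eq_vecMulVec {V : Type*} (ψ : (V → Fin 2) → ℂ) :
    projOf ψ = vecMulVec ψ (star ψ) := rfl

section StabilizerState

variable {V : Type*} [Fintype V] [DecidableEq V] {G : MaxStabilizer V} {ψ : (V → Fin 2) → ℂ}

lemma trace_mul_projOf (M : QOp V) (ψ : (V → Fin 2) → ℂ) :
    (M * projOf ψ).trace = star ψ ⬝ᵥ (M *ᵥ ψ) := by
  rw [projOf_eq_vecMulVec, mul_vecMulVec, trace_vecMulVec, dotProduct_comm]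

lemma IsStabState.star_dotProduct_self (hψ : IsStabState G ψ) : star ψ ⬝ᵥ ψ = 1 := hψ.2

lemma IsStabState.proj_eq_projOf (hψ : IsStabState G ψ) : G.proj = projOf ψ := by
  refine Matrix.eq_of_mul_eq_right_of_trace_eq G.isHermitian_proj ?_ G.isIdempotentElem_proj ?_
    ?_ ?_
  · simp [IsHermitian, projOf_eq_vecMulVec]
  · rw [IsIdempotentElem, projOf_eq_vecMulVec, vecMulVec_mul_vecMulVec,
      hψ.star_dotProduct_self, one_smul]
  · rw [projOf_eq_vecMulVec, mul_vecMulVec, G.proj_mulVec hψ]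
  · rw [G.trace_proj, projOf_eq_vecMulVec, trace_vecMulVec, dotProduct_comm,
      hψ.star_dotProduct_self]

lemma IsStabState.star_dotProduct_pauliOp_mulVec_eq_zero (hψ : IsStabState G ψ)
    {R : V → Fin 4} (hR : R ≠ 0) (hsmall : (psupp R).card < sdelta G) :
    star ψ ⬝ᵥ (pauliOp R *ᵥ ψ) = 0 := by
  rw [← trace_mul_projOf, ← hψ.proj_eq_projOf, MaxStabilizer.proj, Matrix.mul_smul, trace_smul,
    Finset.mul_sum, trace_sum, Finset.sum_eq_zero, smul_zero]
  intro g hg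
  obtain ⟨c, p, hc, rfl⟩ := G.mem_pauli g hg
  rw [Matrix.mul_smul, trace_smul, trace_pauliOp_mul_pauliOp, if_neg, smul_zero]
  rintro rfl
  exact hsmall.not_ge (G.sdelta_le hc hg (smul_pauliOp_ne_one hR c))

lemma IsStabState.star_pauliOp_mulVec_dotProduct (hψ : IsStabState G ψ) {P Q : V → Fin 4}
    (hPQ : (psupp P).card + (psupp Q).card < sdelta G) :
    star (pauliOp P *ᵥ ψ) ⬝ᵥ (pauliOp Q *ᵥ ψ) = if P = Q then 1 else 0 := by
  rw [star_mulVec, ← dotProduct_mulVec, conjTranspose_pauliOp, mulVec_mulVec]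
  split_ifs with h
  · rw [h, pauliOp_mul_self, one_mulVec, hψ.star_dotProduct_self]
  · have hR : (fun i => P i ^^^ Q i) ≠ 0 := fun hR =>
      h (funext fun i => fin4_xor_eq_zero_iff.mp (congrFun hR i))
    have hsmall : (psupp fun i => P i ^^^ Q i).card < sdelta G :=
      ((Finset.card_le_card (psupp_xor_subset P Q)).trans (Finset.card_union_le _ _)).trans_lt
        hPQ
    rw [pauliOp_mul, smul_mulVec, dotProduct_smul,
      hψ.star_dotProduct_pauliOp_mulVec_eq_zero hR hsmall, smul_zero]

end StabilizerState

theorem stmt8_general (N k : ℕ) (G : MaxStabilizer (Fin N)) (ψ : (Fin N → Fin 2) → ℂ)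
    (hψ : IsStabState G ψ) (hδ : k + 1 ≤ sdelta G) (h : (Fin N → Fin 4) → ℂ)
    (hne : ∃ P, h P ≠ 0)
    (hann : (∑ P : Fin N → Fin 4, h P • pauliOp P).mulVec ψ = 0) :
    ∃ P, h P ≠ 0 ∧ (k + 2) / 2 ≤ (psupp P).card := by
  by_contra! hsmall
  have horth : ∀ P Q, h P ≠ 0 → h Q ≠ 0 →
      star (pauliOp P *ᵥ ψ) ⬝ᵥ (pauliOp Q *ᵥ ψ) = if P = Q then 1 else 0 := fun P Q hP hQ =>
    hψ.star_pauliOp_mulVec_dotProduct (by have := hsmall P hP; have := hsmall Q hQ; omega)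
  have hexpand : (∑ P, h P • pauliOp P) *ᵥ ψ = ∑ P, h P • (pauliOp P *ᵥ ψ) := by
    simp only [sum_mulVec, smul_mulVec]
  have hnorm : star h ⬝ᵥ h = 0 := by
    rw [← star_sum_smul_dotProduct_sum_smul h _ horth, ← hexpand, hann, dotProduct_zero]
  obtain ⟨P, hP⟩ := hne
  exact hP (congrFun (dotProduct_star_self_eq_zero.mp hnorm) P)

/-- if `δ(G) ≥ k+1`, any nonzero traceless Hamiltonian annihilating the
stabilizer state contains a Pauli term with support of size at least `⌈(k+1)/2⌉`. -/
theorem stmt8 (N k : ℕ) (G : MaxStabilizer (Fin N)) (ψ : (Fin N → Fin 2) → ℂ)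
    (hψ : IsStabState G ψ) (hδ : k + 1 ≤ sdelta G) (h : (Fin N → Fin 4) → ℂ)
    (htr : h (fun _ => 0) = 0)
    (hne : ∃ P, h P ≠ 0)
    (hann : (∑ P : Fin N → Fin 4, h P • pauliOp P).mulVec ψ = 0) :
    ∃ P, h P ≠ 0 ∧ (k + 2) / 2 ≤ (psupp P).card :=
  stmt8_general N k G ψ hψ hδ h hne hann
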